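/- For every even natural number d, the alternating sum N(d;0,0,0) − N(d;2,0,0) − N(d;0,2,0) − N(d;0,0,2) + N(d;2,2,0) + N(d;2,0,2) + N(d;0,2,2) − N(d;2,2,2), computed in ℤ, equals 1 if d ≡ 0 (mod 4) and equals 0 if d ≡ 2 (mod 4). -/

import Mathlib

open Finset

/-- `N d a b c` is the number of 2×2×2 arrays of non-negative integers with total
sum `d` whose slice sums in the three directions differ by `a`, `b`, `c`
respectively; it is the dimension of the weight space `W(d;a,b,c)`. -/
noncomputable def N (d a b c : ℕ) : ℕ :=
  Set.ncard {e : Fin 2 × Fin 2 × Fin 2 → ℕ |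
    (∑ i : Fin 2, ∑ j : Fin 2, ∑ k : Fin 2, e (i, j, k)) = d ∧
    (∑ j : Fin 2, ∑ k : Fin 2, e (0, j, k)) = (∑ j : Fin 2, ∑ k : Fin 2, e (1, j, k)) + a ∧
    (∑ i : Fin 2, ∑ k : Fin 2, e (i, 0, k)) = (∑ i : Fin 2, ∑ k : Fin 2, e (i, 1, k)) + b ∧
    (∑ i : Fin 2, ∑ j : Fin 2, e (i, j, 0)) = (∑ i : Fin 2, ∑ j : Fin 2, e (i, j, 1)) + c}

/-!
Group the eight cells of the cube into four antipodal pairs `{p, p̄}`. Raising the entries at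
`p` and `p̄` by one leaves `(a, b, c)` unchanged and raises `d` by two, so sieving these moves out
pair by pair writes the alternating sum at degree `2m` as a partial sum, over `m`, of the same
alternating sum over arrays that are reduced (have a zero entry) at one more pair. Once all four
pairs are reduced, an array is an integer vector `x ∈ ℤ⁴` with `∑ |xᵢ| = d`, and the vectors of a
given `(a, b, c)` form a line `x₀ + ℤ (1, 1, 1, 1)`, so these counts are explicit. In generating
functions: the fully reduced alternating sum is `(1 - u)⁴ / (1 - u²)`, each sieve step divides by
`1 - u`, and `1 / (1 - u²)` is left. The symmetry of `N` in `a, b, c` merges the eight terms into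
four with coefficients `1, -3, 3, -1`.
-/

section PairArrays

variable {ι V : Type*} [Fintype ι] [AddCommGroup V]

/- An array indexed by antipodal pairs: `q i` holds the entries at a cell of weight `s i` and at its
antipode, of weight `-s i`. -/
def pairDegree (q : ι → ℕ × ℕ) : ℕ := ∑ i, ((q i).1 + (q i).2)

def pairCharge (s : ι → V) (q : ι → ℕ × ℕ) : V := ∑ i, (((q i).1 : ℤ) - (q i).2) • s i

def pairFiber (s : ι → V) (K : Finset ι) (d : ℕ) (w : V) : Set (ι → ℕ × ℕ) :=
  {q | pairDegree q = d ∧ pairCharge s q = w ∧ ∀ i ∈ K, min (q i).1 (q i).2 = 0}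

variable (s : ι → V)

lemma pairDegree_add (q r : ι → ℕ × ℕ) : pairDegree (q + r) = pairDegree q + pairDegree r := by
  simp only [pairDegree, Pi.add_apply, Prod.fst_add, Prod.snd_add, ← sum_add_distrib]
  exact sum_congr rfl fun _ _ => by ring

lemma pairCharge_add (q r : ι → ℕ × ℕ) :
    pairCharge s (q + r) = pairCharge s q + pairCharge s r := by
  simp only [pairCharge, Pi.add_apply, Prod.fst_add, Prod.snd_add, ← sum_add_distrib, ← add_smul]
  exact sum_congr rfl fun _ _ => by push_cast; ring_nf

lemma pairDegree_single [DecidableEq ι] (i : ι) :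
    pairDegree (Pi.single i ((1, 1) : ℕ × ℕ)) = 2 := by
  rw [pairDegree, Fintype.sum_eq_single i fun j hj => by simp [hj]]
  simp

lemma pairCharge_single [DecidableEq ι] (i : ι) :
    pairCharge s (Pi.single i ((1, 1) : ℕ × ℕ)) = 0 := by
  refine sum_eq_zero fun j _ => ?_
  by_cases hj : j = i <;> simp [hj]

lemma pairFiber_finite (K : Finset ι) (d : ℕ) (w : V) : (pairFiber s K d w).Finite := by
  refine (Set.Finite.pi (t := fun _ => Set.Iic d ×ˢ Set.Iic d)
    fun _ => (Set.finite_Iic d).prod (Set.finite_Iic d)).subset ?_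
  rintro q ⟨rfl, -, -⟩ i -
  have := single_le_sum (f := fun i => (q i).1 + (q i).2) (fun _ _ => Nat.zero_le _) (mem_univ i)
  simp only [Set.mem_prod, Set.mem_Iic, pairDegree] at this ⊢
  omega

lemma pairFiber_zero (K K' : Finset ι) (w : V) : pairFiber s K 0 w = pairFiber s K' 0 w := by
  have hred (q : ι → ℕ × ℕ) (h : pairDegree q = 0) (i : ι) : min (q i).1 (q i).2 = 0 := by
    have := (sum_eq_zero_iff.mp h) i (mem_univ i)
    omega
  ext q
  exact ⟨fun ⟨h0, hw, _⟩ => ⟨h0, hw, fun i _ => hred q h0 i⟩,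
    fun ⟨h0, hw, _⟩ => ⟨h0, hw, fun i _ => hred q h0 i⟩⟩

lemma pairFiber_add_two [DecidableEq ι] {K : Finset ι} {i : ι} (hi : i ∉ K) (d : ℕ) (w : V) :
    pairFiber s K (d + 2) w =
      pairFiber s (insert i K) (d + 2) w ∪ (· + Pi.single i (1, 1)) '' pairFiber s K d w := by
  set δ : ι → ℕ × ℕ := Pi.single i (1, 1)
  have hδ (j : ι) (hj : j ∈ K) : δ j = 0 := by
    simp [δ, show j ≠ i from fun h => hi (h ▸ hj)]
  ext q
  constructor
  · rintro ⟨hd, hw, hK⟩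
    by_cases hqi : min (q i).1 (q i).2 = 0
    · exact Or.inl ⟨hd, hw, forall_mem_insert _ _ _ |>.mpr ⟨hqi, hK⟩⟩
    have hq : q - δ + δ = q := by
      funext j
      by_cases hj : j = i
      · subst hj; ext <;> simp [δ] <;> omega
      · simp [δ, hj]
    refine Or.inr ⟨q - δ, ⟨?_, ?_, fun j hj => ?_⟩, hq⟩
    · have := pairDegree_add (q - δ) δ
      rw [hq, pairDegree_single] at this
      omega
    · have := pairCharge_add s (q - δ) δ
      rwa [hq, pairCharge_single, add_zero, hw, eq_comm] at this
    · simpa [hδ j hj] using hK j hj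
  · rintro (⟨hd, hw, hK⟩ | ⟨p, ⟨hd, hw, hK⟩, rfl⟩)
    · exact ⟨hd, hw, fun j hj => hK j (mem_insert_of_mem hj)⟩
    · exact ⟨by rw [pairDegree_add, pairDegree_single, hd],
        by rw [pairCharge_add, pairCharge_single, hw, add_zero],
        fun j hj => by simpa [hδ j hj] using hK j hj⟩

lemma ncard_pairFiber_add_two [DecidableEq ι] {K : Finset ι} {i : ι} (hi : i ∉ K) (d : ℕ)
    (w : V) : (pairFiber s K (d + 2) w).ncard =
      (pairFiber s (insert i K) (d + 2) w).ncard + (pairFiber s K d w).ncard := by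
  have hdisj : Disjoint (pairFiber s (insert i K) (d + 2) w)
      ((· + Pi.single i (1, 1)) '' pairFiber s K d w) := by
    refine Set.disjoint_left.mpr ?_
    rintro _ ⟨-, -, hK⟩ ⟨p, -, rfl⟩
    simpa using hK i (mem_insert_self i K)
  rw [pairFiber_add_two s hi, Set.ncard_union_eq hdisj (pairFiber_finite s _ _ _)
    ((pairFiber_finite s _ _ _).image _), Set.ncard_image_of_injective _ (add_left_injective _)]

lemma ncard_pairFiber_univ (d : ℕ) (w : V) :
    (pairFiber s univ d w).ncard =
      {x : ι → ℤ | ∑ i, (x i).natAbs = d ∧ ∑ i, x i • s i = w}.ncard := by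
  refine Set.ncard_congr (fun q _ i => ((q i).1 : ℤ) - (q i).2) ?_ ?_ ?_
  · rintro q ⟨hd, hw, hK⟩
    refine ⟨hd ▸ sum_congr rfl fun i _ => ?_, hw⟩
    have := hK i (mem_univ i)
    dsimp only
    omega
  · intro q r ⟨_, _, hq⟩ ⟨_, _, hr⟩ h
    funext i
    have := congrFun h i
    have := hq i (mem_univ i)
    have := hr i (mem_univ i)
    ext <;> omega
  · rintro x ⟨hd, hw⟩
    refine ⟨fun i => ((x i).toNat, (-x i).toNat),
      ⟨hd ▸ sum_congr rfl fun i _ => by dsimp only; omega,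
        hw ▸ sum_congr rfl fun i _ => by dsimp only; congr 1; omega,
        fun i _ => by dsimp only; omega⟩, funext fun i => by dsimp only; omega⟩

end PairArrays

lemma N_comm_ab (d a b c : ℕ) : N d a b c = N d b a c := by
  refine Set.ncard_congr (fun e _ p => e (p.2.1, p.1, p.2.2)) ?_ ?_ ?_
  · intro e he
    simp only [Set.mem_ofPred_eq, Fin.sum_univ_two] at he ⊢
    omega
  · intro e e' _ _ h
    funext ⟨i, j, k⟩
    exact congrFun h (j, i, k)
  · intro e he
    refine ⟨fun p => e (p.2.1, p.1, p.2.2), ?_, rfl⟩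
    simp only [Set.mem_ofPred_eq, Fin.sum_univ_two] at he ⊢
    omega

lemma N_comm_bc (d a b c : ℕ) : N d a b c = N d a c b := by
  refine Set.ncard_congr (fun e _ p => e (p.1, p.2.2, p.2.1)) ?_ ?_ ?_
  · intro e he
    simp only [Set.mem_ofPred_eq, Fin.sum_univ_two] at he ⊢
    omega
  · intro e e' _ _ h
    funext ⟨i, j, k⟩
    exact congrFun h (i, k, j)
  · intro e he
    refine ⟨fun p => e (p.1, p.2.2, p.2.1), ?_, rfl⟩
    simp only [Set.mem_ofPred_eq, Fin.sum_univ_two] at he ⊢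
    omega

/- Pair `i` is an even cell of the cube together with its antipode; `cubeSigns i` lists the signs
of the even cell's contributions to the three slice differences. -/
def cubeSigns : Fin 4 → ℤ × ℤ × ℤ := ![(1, 1, 1), (1, -1, -1), (-1, 1, -1), (-1, -1, 1)]

lemma N_eq_ncard_pairFiber (d a b c : ℕ) :
    N d a b c = (pairFiber cubeSigns ∅ d ((a : ℤ), (b : ℤ), (c : ℤ))).ncard := by
  refine Set.ncard_congr (fun e _ => ![(e (0, 0, 0), e (1, 1, 1)), (e (0, 1, 1), e (1, 0, 0)),
    (e (1, 0, 1), e (0, 1, 0)), (e (1, 1, 0), e (0, 0, 1))]) ?_ ?_ ?_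
  · intro e he
    simp only [Set.mem_ofPred_eq, Fin.sum_univ_two] at he
    simp only [pairFiber, pairDegree, pairCharge, cubeSigns, Set.mem_ofPred_eq, Fin.sum_univ_four,
      Matrix.cons_val, Prod.smul_mk, Prod.mk_add_mk, Prod.mk.injEq, smul_eq_mul]
    refine ⟨by omega, by omega, by simp⟩
  · intro e e' _ _ h
    funext ⟨i, j, k⟩
    have h0 := congrFun h 0
    have h1 := congrFun h 1
    have h2 := congrFun h 2
    have h3 := congrFun h 3
    simp only [Matrix.cons_val, Prod.mk.injEq] at h0 h1 h2 h3
    fin_cases i <;> fin_cases j <;> fin_cases k <;> simp [*]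
  · rintro q ⟨hd, hw, -⟩
    refine ⟨fun p => ![![![(q 0).1, (q 3).2], ![(q 2).2, (q 1).1]],
      ![![(q 1).2, (q 2).1], ![(q 3).1, (q 0).2]]] p.1 p.2.1 p.2.2, ?_, ?_⟩
    · simp only [pairDegree, pairCharge, cubeSigns, Fin.sum_univ_four,
        Matrix.cons_val, Prod.smul_mk, Prod.mk_add_mk, Prod.mk.injEq, smul_eq_mul] at hd hw
      simp only [Set.mem_ofPred_eq, Fin.sum_univ_two, Matrix.cons_val]
      omega
    · funext i
      fin_cases i <;> rfl

lemma sum_smul_cubeSigns_eq_iff (x y : Fin 4 → ℤ) :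
    ∑ i, x i • cubeSigns i = ∑ i, y i • cubeSigns i ↔ ∃ t : ℤ, x = y + fun _ => t := by
  simp only [cubeSigns, Fin.sum_univ_four, Matrix.cons_val, Prod.smul_mk, Prod.mk_add_mk,
    Prod.mk.injEq, smul_eq_mul]
  constructor
  · intro h
    refine ⟨x 0 - y 0, funext fun i => ?_⟩
    fin_cases i <;> simp <;> omega
  · rintro ⟨t, rfl⟩
    simp only [Pi.add_apply]
    omega

lemma ncard_pairFiber_univ_cubeSigns {w : ℤ × ℤ × ℤ} (y : Fin 4 → ℤ)
    (hy : ∑ i, y i • cubeSigns i = w) (n : ℕ) :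
    (pairFiber cubeSigns univ n w).ncard = {t : ℤ | ∑ i, (y i + t).natAbs = n}.ncard := by
  rw [ncard_pairFiber_univ, eq_comm, ← hy]
  refine Set.ncard_congr (fun t _ => y + fun _ => t)
    (fun t ht => ⟨by exact ht, (sum_smul_cubeSigns_eq_iff _ y).mpr ⟨t, rfl⟩⟩) ?_ ?_
  · intro t t' _ _ h
    simpa using congrFun h 0
  · rintro x ⟨hn, hw⟩
    obtain ⟨t, rfl⟩ := (sum_smul_cubeSigns_eq_iff x y).mp hw
    exact ⟨t, hn, rfl⟩

lemma ncard_pairFiber_univ_zero (m : ℕ) :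
    (pairFiber cubeSigns univ (2 * m) 0).ncard = if m = 0 then 1 else if Even m then 2 else 0 := by
  rw [ncard_pairFiber_univ_cubeSigns 0 (by simp)]
  simp only [Pi.zero_apply, zero_add, sum_const, card_univ, Fintype.card_fin, smul_eq_mul]
  rcases Nat.even_or_odd' m with ⟨k, rfl | rfl⟩
  · rcases Nat.eq_zero_or_pos k with rfl | hk
    · rw [Set.ncard_eq_one.mpr ⟨0, by ext t; simp⟩]
      simp
    · rw [Set.ncard_eq_two.mpr ⟨(k : ℤ), -(k : ℤ), by omega, by ext t; simp; omega⟩]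
      simp
      omega
  · rw [show {t : ℤ | 4 * t.natAbs = 2 * (2 * k + 1)} = ∅ by ext t; simp; omega]
    simp

lemma ncard_pairFiber_univ_two_zero_zero (m : ℕ) :
    (pairFiber cubeSigns univ (2 * m) (2, 0, 0)).ncard = if Even m then 0 else 2 := by
  rw [ncard_pairFiber_univ_cubeSigns ![1, 1, 0, 0] (by simp [Fin.sum_univ_four, cubeSigns])]
  simp only [Fin.sum_univ_four, Matrix.cons_val]
  rcases Nat.even_or_odd' m with ⟨k, rfl | rfl⟩
  · rw [show {t : ℤ | _} = ∅ by ext t; simp; omega]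
    simp
  · rw [Set.ncard_eq_two.mpr ⟨(k : ℤ), -(k : ℤ) - 1, by omega, by ext t; simp; omega⟩]
    simp

lemma ncard_pairFiber_univ_two_two_zero (m : ℕ) :
    (pairFiber cubeSigns univ (2 * m) (2, 2, 0)).ncard =
      if m = 1 then 1 else if m ≠ 0 ∧ Even m then 2 else 0 := by
  rw [ncard_pairFiber_univ_cubeSigns ![1, 0, 0, -1] (by simp [Fin.sum_univ_four, cubeSigns])]
  simp only [Fin.sum_univ_four, Matrix.cons_val]
  rcases Nat.even_or_odd' m with ⟨_ | k, rfl | rfl⟩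
  · rw [show {t : ℤ | _} = ∅ by ext t; simp; omega]
    simp
  · rw [Set.ncard_eq_one.mpr ⟨0, by ext t; simp; omega⟩]
    simp
  · rw [Set.ncard_eq_two.mpr ⟨(k : ℤ) + 1, -(k : ℤ) - 1, by omega, by ext t; simp; omega⟩]
    simp
  · rw [show {t : ℤ | _} = ∅ by ext t; simp; omega]
    simp [parity_simps]

lemma ncard_pairFiber_univ_two_two_two (m : ℕ) :
    (pairFiber cubeSigns univ (2 * m) (2, 2, 2)).ncard =
      if m = 1 ∨ m = 2 then 1 else if Even m then 0 else 2 := by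
  rw [ncard_pairFiber_univ_cubeSigns ![2, 0, 0, 0] (by simp [Fin.sum_univ_four, cubeSigns]; rfl)]
  simp only [Fin.sum_univ_four, Matrix.cons_val]
  rcases Nat.even_or_odd' m with ⟨_ | _ | k, rfl | rfl⟩
  · rw [show {t : ℤ | _} = ∅ by ext t; simp; omega]
    simp
  · rw [Set.ncard_eq_one.mpr ⟨0, by ext t; simp; omega⟩]
    simp
  · rw [Set.ncard_eq_one.mpr ⟨-1, by ext t; simp; omega⟩]
    simp
  · rw [Set.ncard_eq_two.mpr ⟨1, -2, by omega, by ext t; simp; omega⟩]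
    decide
  · rw [show {t : ℤ | _} = ∅ by ext t; simp; omega]
    simp
  · rw [Set.ncard_eq_two.mpr ⟨(k : ℤ) + 2, -(k : ℤ) - 3, by omega, by ext t; simp; omega⟩]
    simp [parity_simps]

def backDiff (f : ℕ → ℤ) : ℕ → ℤ
  | 0 => f 0
  | m + 1 => f (m + 1) - f m

lemma sum_range_backDiff (f : ℕ → ℤ) (m : ℕ) : ∑ j ∈ range (m + 1), backDiff f j = f m := by
  rw [sum_range_succ']
  simp only [backDiff]
  rw [sum_range_sub, sub_add_cancel]

noncomputable def altFiber (K : Finset (Fin 4)) (d : ℕ) : ℤ :=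
  (pairFiber cubeSigns K d (0, 0, 0)).ncard - 3 * (pairFiber cubeSigns K d (2, 0, 0)).ncard
    + 3 * (pairFiber cubeSigns K d (2, 2, 0)).ncard - (pairFiber cubeSigns K d (2, 2, 2)).ncard

lemma altFiber_add_two {K : Finset (Fin 4)} {i : Fin 4} (hi : i ∉ K) (d : ℕ) :
    altFiber K (d + 2) = altFiber (insert i K) (d + 2) + altFiber K d := by
  simp only [altFiber, ncard_pairFiber_add_two cubeSigns hi]
  push_cast
  ring

lemma altFiber_of_backDiff {K : Finset (Fin 4)} {i : Fin 4} (hi : i ∉ K) {f : ℕ → ℤ}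
    (hf : ∀ m, altFiber (insert i K) (2 * m) = backDiff f m) (m : ℕ) :
    altFiber K (2 * m) = f m := by
  induction m with
  | zero => simpa [altFiber, backDiff, pairFiber_zero cubeSigns (insert i K) K] using hf 0
  | succ m ih =>
    have := hf (m + 1)
    rw [mul_add_one] at this ⊢
    rw [altFiber_add_two hi, this, ih, backDiff]
    ring

lemma altFiber_univ (m : ℕ) :
    altFiber univ (2 * m) =
      backDiff (backDiff (backDiff (backDiff fun n => if Even n then 1 else 0))) m := by
  rw [altFiber, show ((0, 0, 0) : ℤ × ℤ × ℤ) = 0 from rfl, ncard_pairFiber_univ_zero,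
    ncard_pairFiber_univ_two_zero_zero, ncard_pairFiber_univ_two_two_zero,
    ncard_pairFiber_univ_two_two_two]
  match m with
  | 0 | 1 | 2 | 3 => simp [backDiff, parity_simps]
  | k + 4 => by_cases hk : Even k <;> simp [backDiff, parity_simps, hk]

lemma altFiber_empty (m : ℕ) : altFiber ∅ (2 * m) = if Even m then 1 else 0 := by
  have h4 (n : ℕ) : altFiber (insert 0 {1, 2, 3}) (2 * n) =
      backDiff (backDiff (backDiff (backDiff fun n => if Even n then 1 else 0))) n := by
    rw [show (insert 0 {1, 2, 3} : Finset (Fin 4)) = univ by decide, altFiber_univ]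
  have h1 := altFiber_of_backDiff (by decide) <| altFiber_of_backDiff (by decide) <|
    altFiber_of_backDiff (by decide) h4
  rw [← insert_empty] at h1
  exact altFiber_of_backDiff (by decide) h1 m

lemma alternating_sum_N (m : ℕ) :
    (N (2 * m) 0 0 0 : ℤ) - N (2 * m) 2 0 0 - N (2 * m) 0 2 0 - N (2 * m) 0 0 2
      + N (2 * m) 2 2 0 + N (2 * m) 2 0 2 + N (2 * m) 0 2 2 - N (2 * m) 2 2 2 =
      if Even m then 1 else 0 := by
  rw [N_comm_bc _ 0 0 2, N_comm_ab _ 0 2 0, N_comm_ab _ 0 2 2, N_comm_bc _ 2 0 2, ← altFiber_empty]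
  simp only [altFiber, N_eq_ncard_pairFiber, Nat.cast_zero, Nat.cast_ofNat]
  ring

theorem alternating_sum_weight_space_dims_general (d : ℕ) :
    (d % 4 = 0 →
      (N d 0 0 0 : ℤ) - N d 2 0 0 - N d 0 2 0 - N d 0 0 2
        + N d 2 2 0 + N d 2 0 2 + N d 0 2 2 - N d 2 2 2 = 1) ∧
    (d % 4 = 2 →
      (N d 0 0 0 : ℤ) - N d 2 0 0 - N d 0 2 0 - N d 0 0 2
        + N d 2 2 0 + N d 2 0 2 + N d 0 2 2 - N d 2 2 2 = 0) := by
  refine ⟨fun h => ?_, fun h => ?_⟩ <;>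
    rw [show d = 2 * (d / 2) by omega, alternating_sum_N]
  · exact if_pos (Nat.even_iff.mpr (by omega))
  · exact if_neg (Nat.not_even_iff.mpr (by omega))

/-- For every even degree `d`, the alternating sum of the weight space dimensions
equals 1 if `d ≡ 0 (mod 4)` and 0 if `d ≡ 2 (mod 4)`. -/
theorem alternating_sum_weight_space_dims (d : ℕ) (hd : Even d) :
    (d % 4 = 0 →
      (N d 0 0 0 : ℤ) - N d 2 0 0 - N d 0 2 0 - N d 0 0 2
        + N d 2 2 0 + N d 2 0 2 + N d 0 2 2 - N d 2 2 2 = 1) ∧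
    (d % 4 = 2 →
      (N d 0 0 0 : ℤ) - N d 2 0 0 - N d 0 2 0 - N d 0 0 2
        + N d 2 2 0 + N d 2 0 2 + N d 0 2 2 - N d 2 2 2 = 0) :=
  alternating_sum_weight_space_dims_general d
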